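/- Let Z be an algebraic subset of ℂ^m × ℂ^n with proper projection π onto ℂ^m such that π(Z) is an algebraic subset of ℂ^{m−1} × ℂ with proper projection onto ℂ^{m−1}, and let P be a compact polynomial polyhedron in ℂ^{m−1}. Then there exist s, s̃ > 0 such that Z ∩ (P × ℂ × ℂ^n) = Z ∩ (P × cl(B₁(s)) × cl(B_n(s̃))), and this set is a compact polynomial polyhedron in ℂ^m × ℂ^n; in particular it is a polynomially convex compact set. Here B_l(t) denotes the open ball of radius t in ℂ^l and cl denotes closure. -/

import Mathlib

open Set Filter Topology MvPolynomial

noncomputable section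

/-- The complex Euclidean space `ℂ^N`. -/
abbrev CE (N : ℕ) := Fin N → ℂ

/-- The natural projection `ℂ^{a+b} → ℂ^a` (onto the first `a` coordinates). -/
def projFst (a b : ℕ) (z : CE (a + b)) : CE a := fun i => z (Fin.castAdd b i)

/-- The natural projection `ℂ^{a+b} → ℂ^b` (onto the last `b` coordinates). -/
def projSnd (a b : ℕ) (z : CE (a + b)) : CE b := fun i => z (Fin.natAdd a i)

/-- The cylinder `U × ℂ^b ⊆ ℂ^{a+b}` over `U ⊆ ℂ^a`. -/
def cylOver {a : ℕ} (b : ℕ) (U : Set (CE a)) : Set (CE (a + b)) :=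
  {z | projFst a b z ∈ U}

/-- The product `U × B ⊆ ℂ^{a+b}` of `U ⊆ ℂ^a` and `B ⊆ ℂ^b`. -/
def prodSet {a b : ℕ} (U : Set (CE a)) (B : Set (CE b)) : Set (CE (a + b)) :=
  {z | projFst a b z ∈ U ∧ projSnd a b z ∈ B}

/-- The open ball of radius `r` in `ℂ = ℂ^1`. -/
def ball1 (r : ℝ) : Set (CE 1) := {w | ‖w 0‖ < r}

/-- The open Euclidean ball of radius `t` in `ℂ^l`. -/
def eball (l : ℕ) (t : ℝ) : Set (CE l) := {x | ∑ i, ‖x i‖ ^ 2 < t ^ 2}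

/-- An algebraic subset of `ℂ^N`: the common zero set of finitely many polynomials. -/
def IsAlgebraicSet {N : ℕ} (X : Set (CE N)) : Prop :=
  ∃ s : Finset (MvPolynomial (Fin N) ℂ), X = {z | ∀ p ∈ s, eval z p = 0}

/-- An analytic subset `X` of an open set `Ω ⊆ ℂ^N`: locally (at every point of `Ω`)
the common zero set of finitely many holomorphic functions. -/
def IsAnalyticSet {N : ℕ} (Ω X : Set (CE N)) : Prop :=
  X ⊆ Ω ∧ ∀ z ∈ Ω, ∃ U : Set (CE N), IsOpen U ∧ z ∈ U ∧ U ⊆ Ω ∧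
    ∃ s : Finset (CE N → ℂ), (∀ f ∈ s, AnalyticOnNhd ℂ f U) ∧
      X ∩ U = {w ∈ U | ∀ f ∈ s, f w = 0}

/-- `X` is, near `a`, a `d`-dimensional complex submanifold of `ℂ^N`: there is a local
biholomorphism straightening `X` to the linear subspace `{z : z_i = 0 for i ≥ d}`. -/
def IsSubmanifoldPtOfDim {N : ℕ} (X : Set (CE N)) (d : ℕ) (a : CE N) : Prop :=
  ∃ (V W : Set (CE N)) (φ ψ : CE N → CE N),
    IsOpen V ∧ a ∈ V ∧ IsOpen W ∧
    AnalyticOnNhd ℂ φ V ∧ AnalyticOnNhd ℂ ψ W ∧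
    MapsTo φ V W ∧ MapsTo ψ W V ∧
    (∀ x ∈ V, ψ (φ x) = x) ∧ (∀ y ∈ W, φ (ψ y) = y) ∧
    φ '' (X ∩ V) = W ∩ {z | ∀ i : Fin N, d ≤ (i : ℕ) → z i = 0}

/-- `X` is purely `k`-dimensional: every point of `X` near which `X` is a submanifold is a
point of dimension exactly `k`, and such (regular) points are dense in `X`. -/
def PureDimOf {N : ℕ} (X : Set (CE N)) (k : ℕ) : Prop :=
  (∀ a ∈ X, a ∈ closure {b | b ∈ X ∧ IsSubmanifoldPtOfDim X k b}) ∧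
  (∀ b ∈ X, ∀ d, IsSubmanifoldPtOfDim X d b → d = k)

/-- The singular locus of `X`: the points of `X` at which `X` is not locally a submanifold. -/
def singLocus {N : ℕ} (X : Set (CE N)) : Set (CE N) :=
  {a ∈ X | ¬ ∃ d, IsSubmanifoldPtOfDim X d a}

/-- An irreducible analytic subset of the open set `Ω`. -/
def IsIrreducibleAnalyticSet {N : ℕ} (Ω X : Set (CE N)) : Prop :=
  IsAnalyticSet Ω X ∧ X.Nonempty ∧
  ∀ A B : Set (CE N), IsAnalyticSet Ω A → IsAnalyticSet Ω B → X = A ∪ B → X = A ∨ X = B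

/-- `C` is an (analytic) irreducible component of the analytic set `X ⊆ Ω`:
an irreducible analytic subset of `Ω` contained in `X`, maximal among such. -/
def IsIrreducibleComponent {N : ℕ} (Ω X C : Set (CE N)) : Prop :=
  IsIrreducibleAnalyticSet Ω C ∧ C ⊆ X ∧
  ∀ C' : Set (CE N), IsIrreducibleAnalyticSet Ω C' → C ⊆ C' → C' ⊆ X → C' = C

/-- `A` is the union of some of the analytic irreducible components of `X` in `Ω`. -/
def IsUnionOfComponents {N : ℕ} (Ω X A : Set (CE N)) : Prop :=
  ∃ 𝒞 : Set (Set (CE N)), (∀ C ∈ 𝒞, IsIrreducibleComponent Ω X C) ∧ A = ⋃₀ 𝒞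

/-- The germ of the analytic set `Z` at `a` is irreducible. -/
def GermIrreducibleAt {N : ℕ} (Z : Set (CE N)) (a : CE N) : Prop :=
  ∀ U A B : Set (CE N), IsOpen U → a ∈ U → IsAnalyticSet U A → IsAnalyticSet U B →
    Z ∩ U = A ∪ B →
    (∃ V, IsOpen V ∧ a ∈ V ∧ Z ∩ V = A ∩ V) ∨ (∃ V, IsOpen V ∧ a ∈ V ∧ Z ∩ V = B ∩ V)

/-- A Nash function on the open set `U ⊆ ℂ^N`: a holomorphic function annihilated,
locally around every point of `U`, by a nonzero polynomial `P(x, f(x)) = 0`. -/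
def IsNashFn {N : ℕ} (U : Set (CE N)) (f : CE N → ℂ) : Prop :=
  AnalyticOnNhd ℂ f U ∧ ∀ x₀ ∈ U, ∃ V : Set (CE N), IsOpen V ∧ x₀ ∈ V ∧ V ⊆ U ∧
    ∃ P : MvPolynomial (Fin (N + 1)) ℂ, P ≠ 0 ∧
      ∀ x ∈ V, eval (Fin.snoc x (f x)) P = 0

/-- A Nash subset `Y` of the open set `Ω ⊆ ℂ^N`: locally (at every point of `Ω`) the common
zero set of finitely many Nash functions. -/
def IsNashSet {N : ℕ} (Ω Y : Set (CE N)) : Prop :=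
  Y ⊆ Ω ∧ ∀ y ∈ Ω, ∃ U : Set (CE N), IsOpen U ∧ y ∈ U ∧ U ⊆ Ω ∧
    ∃ s : Finset (CE N → ℂ), (∀ f ∈ s, IsNashFn U f) ∧
      Y ∩ U = {x ∈ U | ∀ f ∈ s, f x = 0}

/-- `U` is a domain of holomorphy in `ℂ^N`. -/
def IsDomainOfHolomorphy {N : ℕ} (U : Set (CE N)) : Prop :=
  IsOpen U ∧ ¬ ∃ U₁ U₂ : Set (CE N), IsOpen U₁ ∧ IsOpen U₂ ∧ U₁.Nonempty ∧
    U₁ ⊆ U ∩ U₂ ∧ IsConnected U₂ ∧ ¬ U₂ ⊆ U ∧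
    ∀ f : CE N → ℂ, AnalyticOnNhd ℂ f U →
      ∃ F : CE N → ℂ, AnalyticOnNhd ℂ F U₂ ∧ EqOn f F U₁

/-- A Runge domain in `ℂ^N`: a domain of holomorphy on which every holomorphic function can be
approximated uniformly on compact subsets by polynomials. -/
def IsRungeDomain {N : ℕ} (U : Set (CE N)) : Prop :=
  IsDomainOfHolomorphy U ∧
  ∀ f : CE N → ℂ, AnalyticOnNhd ℂ f U → ∀ K : Set (CE N), IsCompact K → K ⊆ U →
    ∀ ε : ℝ, 0 < ε → ∃ p : MvPolynomial (Fin N) ℂ, ∀ z ∈ K, ‖f z - eval z p‖ < ε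

/-- The projection `ℂ^{a+b} → ℂ^a` restricted to `X` maps `X` into `U` and is proper over `U`. -/
def ProperProjTo {a b : ℕ} (X : Set (CE (a + b))) (U : Set (CE a)) : Prop :=
  (∀ z ∈ X, projFst a b z ∈ U) ∧
  ∀ K : Set (CE a), IsCompact K → K ⊆ U → IsCompact {z ∈ X | projFst a b z ∈ K}

/-- Local uniform convergence of the closed subsets `Y ν` of `W` to `Y'`. -/
def LocUnifConvSets {N : ℕ} (W : Set (CE N)) (Y : ℕ → Set (CE N)) (Y' : Set (CE N)) : Prop :=
  (∀ a ∈ Y', ∃ u : ℕ → CE N, (∀ ν, u ν ∈ Y ν) ∧ Tendsto u atTop (𝓝 a)) ∧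
  ∀ K : Set (CE N), IsCompact K → K ⊆ W → K ∩ Y' = ∅ → ∀ᶠ ν in atTop, K ∩ Y ν = ∅

/-- `X` and `T` meet transversally at `a`: their tangent spaces at `a` span `ℂ^N`. -/
def TransversalAt {N : ℕ} (X T : Set (CE N)) (a : CE N) : Prop :=
  Submodule.span ℂ (tangentConeAt ℂ X a ∪ tangentConeAt ℂ T a) = ⊤

/-- `T` is a `d`-dimensional complex submanifold of the open set `W`. -/
def IsSubmanifoldOfDim {N : ℕ} (W T : Set (CE N)) (d : ℕ) : Prop :=
  T ⊆ W ∧ ∀ a ∈ T, IsSubmanifoldPtOfDim T d a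

/-- Convergence, in the open set `W ⊆ ℂ^N`, of the purely `k`-dimensional analytic sets `Z ν`
to the purely `k`-dimensional analytic set `Z'` in the sense of holomorphic chains (all
multiplicities being `1`): local uniform convergence of supports, together with the degree
condition: for every regular point `a` of `Z'` and every `(N-k)`-dimensional submanifold `T`
transversal to `Z'` at `a`, with compact closure contained in `W` and meeting `Z'` only at `a`
(so that `deg(Z' · T) = 1`), for almost all `ν` the chain `Z ν · T` also has degree one, i.e.
`Z ν` meets `T` in exactly one point, which is a regular point of `Z ν` where the intersection
is transversal. -/
def ChainsConvTo {N : ℕ} (W : Set (CE N)) (k : ℕ) (Z : ℕ → Set (CE N))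
    (Z' : Set (CE N)) : Prop :=
  LocUnifConvSets W Z Z' ∧
  ∀ (a : CE N) (T : Set (CE N)), a ∈ Z' → IsSubmanifoldPtOfDim Z' k a →
    IsSubmanifoldOfDim W T (N - k) → IsCompact (closure T) → closure T ⊆ W →
    Z' ∩ closure T = {a} → TransversalAt Z' T a →
    ∀ᶠ ν in atTop, ∃ b, Z ν ∩ T = {b} ∧ IsSubmanifoldPtOfDim (Z ν) k b ∧
      TransversalAt (Z ν) T b

/-- A polynomial polyhedron in `ℂ^N`: a set of the form `{z : |q₁ z| ≤ c₁, …, |q_s z| ≤ c_s}`. -/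
def IsPolyPolyhedron {N : ℕ} (P : Set (CE N)) : Prop :=
  ∃ (s : Finset (MvPolynomial (Fin N) ℂ)) (c : MvPolynomial (Fin N) ℂ → ℝ),
    P = {z | ∀ q ∈ s, ‖eval z q‖ ≤ c q}

/-- A compact set `K ⊆ ℂ^N` is polynomially convex: it equals its polynomially convex hull. -/
def PolyConvex {N : ℕ} (K : Set (CE N)) : Prop :=
  K = {z | ∀ p : MvPolynomial (Fin N) ℂ,
    ‖eval z p‖ ≤ sSup ((fun w => ‖eval w p‖) '' K)}

/-- Sign condition used in the definition of semialgebraic sets. -/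
def signCond (c : Ordering) (t : ℝ) : Prop :=
  match c with
  | .lt => t < 0
  | .eq => t = 0
  | .gt => 0 < t

/-- Evaluation of a real polynomial in the `2m` real coordinates of `z ∈ ℂ^m`. -/
def realizeRe {m : ℕ} (p : MvPolynomial (Fin m ⊕ Fin m) ℝ) (z : CE m) : ℝ :=
  MvPolynomial.eval (Sum.elim (fun i => (z i).re) (fun i => (z i).im)) p

/-- A subset of `ℂ^m ≅ ℝ^{2m}` is semialgebraic: a finite union of finite intersections of
sets defined by polynomial sign conditions in the real coordinates. -/
def IsSemialgebraic {m : ℕ} (S : Set (CE m)) : Prop :=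
  ∃ (n r : ℕ) (P : Fin n → Fin r → MvPolynomial (Fin m ⊕ Fin m) ℝ)
    (σ : Fin n → Fin r → Ordering),
    S = ⋃ i, ⋂ j, {z | signCond (σ i j) (realizeRe (P i j) z)}

end

/-!
A set cut out from an algebraic set by finitely many polynomial inequalities is a polynomial
polyhedron, and a compact polynomial polyhedron is polynomially convex because every defining
polynomial is bounded on it by its own constant. Compactness comes from composing the two
proper projections, and any bound on the compact set gives the radii `s` and `s̃`.
-/

section Polyhedra

variable {N : ℕ}

lemma isPolyPolyhedron_setOf_forall_norm_eval_le {ι : Type*} [Finite ι]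
    (q : ι → MvPolynomial (Fin N) ℂ) (c : ι → ℝ) :
    IsPolyPolyhedron {z : CE N | ∀ i, ‖eval z (q i)‖ ≤ c i} := by
  classical
  have := Fintype.ofFinite ι
  -- a polynomial occurring several times in the family gets the least of its constants
  refine ⟨Finset.univ.image q, fun r => ⨅ i : {i // q i = r}, c i, ?_⟩
  have hbdd (r : MvPolynomial (Fin N) ℂ) : BddBelow (range fun i : {i // q i = r} => c i) :=
    (finite_range _).bddBelow
  ext z
  simp only [mem_ofPred_eq, Finset.mem_image, Finset.mem_univ, true_and, forall_exists_index,
    forall_apply_eq_imp_iff]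
  refine ⟨fun h i => ?_, fun h i => (h i).trans (ciInf_le (hbdd _) ⟨i, rfl⟩)⟩
  have : Nonempty {j // q j = q i} := ⟨⟨i, rfl⟩⟩
  exact le_ciInf fun j => (congrArg (‖eval z ·‖) j.2).ge.trans (h j)

lemma IsAlgebraicSet.isPolyPolyhedron {X : Set (CE N)} (hX : IsAlgebraicSet X) :
    IsPolyPolyhedron X := by
  obtain ⟨s, rfl⟩ := hX
  exact ⟨s, 0, by simp⟩

lemma IsPolyPolyhedron.inter {A B : Set (CE N)} (hA : IsPolyPolyhedron A)
    (hB : IsPolyPolyhedron B) : IsPolyPolyhedron (A ∩ B) := by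
  obtain ⟨s, c, rfl⟩ := hA
  obtain ⟨t, d, rfl⟩ := hB
  convert isPolyPolyhedron_setOf_forall_norm_eval_le
    (Sum.elim (fun q : s => (q : MvPolynomial (Fin N) ℂ)) fun q : t => q)
    (Sum.elim (fun q : s => c q) fun q : t => d q) using 1
  ext z
  simp [Sum.forall]

lemma IsPolyPolyhedron.preimage_comp {M : ℕ} {P : Set (CE M)} (hP : IsPolyPolyhedron P)
    (e : Fin M → Fin N) : IsPolyPolyhedron ((fun z : CE N => z ∘ e) ⁻¹' P) := by
  obtain ⟨s, c, rfl⟩ := hP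
  convert isPolyPolyhedron_setOf_forall_norm_eval_le
    (fun q : s => rename e (q : MvPolynomial (Fin M) ℂ)) (fun q : s => c q) using 1
  ext z
  simp [eval_rename]

lemma IsPolyPolyhedron.polyConvex {K : Set (CE N)} (hK : IsPolyPolyhedron K)
    (hKc : IsCompact K) : PolyConvex K := by
  have hbdd (p : MvPolynomial (Fin N) ℂ) : BddAbove ((fun w => ‖eval w p‖) '' K) :=
    (hKc.image (continuous_norm.comp (continuous_eval p))).bddAbove
  refine Subset.antisymm (fun z hz p => le_csSup (hbdd p) ⟨z, hz, rfl⟩) fun z hz => ?_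
  rcases K.eq_empty_or_nonempty with rfl | hne
  · exact absurd (hz 1) (by simp)
  obtain ⟨s, c, rfl⟩ := hK
  exact fun q hq => (hz q).trans <|
    csSup_le (hne.image _) (by rintro _ ⟨w, hw, rfl⟩; exact hw q hq)

end Polyhedra

lemma ProperProjTo.isCompact_setOf_projFst_projFst_mem {a b c : ℕ} {X : Set (CE (a + b + c))}
    (hX : ProperProjTo X univ) (hπX : ProperProjTo (projFst (a + b) c '' X) univ)
    {K : Set (CE a)} (hK : IsCompact K) :
    IsCompact {z ∈ X | projFst a b (projFst (a + b) c z) ∈ K} := by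
  convert hX.2 _ (hπX.2 K hK (subset_univ K)) (subset_univ _) using 1
  ext z
  exact ⟨fun ⟨hz, hzK⟩ => ⟨hz, ⟨z, hz, rfl⟩, hzK⟩, fun ⟨hz, _, hzK⟩ => ⟨hz, hzK⟩⟩

lemma mem_eball_of_forall_norm_lt {l : ℕ} {x : CE l} {R : ℝ} (hR : 0 < R)
    (hx : ∀ i, ‖x i‖ < R) : x ∈ eball l ((l + 1) * R) := by
  have hsum : ∑ i, ‖x i‖ ^ 2 ≤ l * R ^ 2 := by
    simpa using Finset.sum_le_sum fun i (_ : i ∈ Finset.univ) =>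
      pow_le_pow_left₀ (norm_nonneg (x i)) (hx i).le 2
  have hl : (0 : ℝ) ≤ l := l.cast_nonneg
  change _ < ((l + 1) * R) ^ 2
  nlinarith [mul_pos hR hR]

theorem polyhedron_over_polyhedron_general (m n : ℕ) (Z : Set (CE (m + 1 + n)))
    (hZ : IsAlgebraicSet Z)
    (hZproper : ProperProjTo Z (univ : Set (CE (m + 1))))
    (hπZproper : ProperProjTo (projFst (m + 1) n '' Z) (univ : Set (CE m)))
    (P : Set (CE m)) (hP : IsPolyPolyhedron P) (hPc : IsCompact P) :
    ∃ s stil : ℝ, 0 < s ∧ 0 < stil ∧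
      {z ∈ Z | projFst m 1 (projFst (m + 1) n z) ∈ P} =
        {z ∈ Z | projFst m 1 (projFst (m + 1) n z) ∈ P ∧
          projFst (m + 1) n z (Fin.last m) ∈ closure (Metric.ball (0 : ℂ) s) ∧
          projSnd (m + 1) n z ∈ closure (eball n stil)} ∧
      IsPolyPolyhedron {z ∈ Z | projFst m 1 (projFst (m + 1) n z) ∈ P} ∧
      IsCompact {z ∈ Z | projFst m 1 (projFst (m + 1) n z) ∈ P} ∧
      PolyConvex {z ∈ Z | projFst m 1 (projFst (m + 1) n z) ∈ P} := by
  set K := {z ∈ Z | projFst m 1 (projFst (m + 1) n z) ∈ P}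
  have hKc : IsCompact K := hZproper.isCompact_setOf_projFst_projFst_mem hπZproper hPc
  have hKpoly : IsPolyPolyhedron K :=
    hZ.isPolyPolyhedron.inter (hP.preimage_comp fun i => Fin.castAdd n (Fin.castAdd 1 i))
  obtain ⟨R, hR, hKR⟩ := hKc.isBounded.exists_pos_norm_lt
  have hcoord (z : CE (m + 1 + n)) (hz : z ∈ K) (i : Fin (m + 1 + n)) : ‖z i‖ < R :=
    (norm_le_pi_norm z i).trans_lt (hKR z hz)
  refine ⟨R, (n + 1) * R, hR, by positivity, ?_, hKpoly, hKc, hKpoly.polyConvex hKc⟩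
  ext z
  refine ⟨fun hz => ⟨hz.1, hz.2, ?_, ?_⟩, fun hz => ⟨hz.1, hz.2.1⟩⟩
  · rw [closure_ball _ hR.ne', mem_closedBall_zero_iff]
    exact (hcoord z hz _).le
  · exact subset_closure (mem_eball_of_forall_norm_lt hR fun i => hcoord z hz _)

/-- Let `Z ⊆ ℂ^{m+1} × ℂ^n` be algebraic with proper projection onto
`ℂ^{m+1}`, such that `π(Z)` is an algebraic subset of `ℂ^m × ℂ` with proper projection onto
`ℂ^m`, and let `P ⊆ ℂ^m` be a compact polynomial polyhedron. Then there are `s, s̃ > 0` with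
`Z ∩ (P × ℂ × ℂ^n) = Z ∩ (P × cl B₁(s) × cl B_n(s̃))`, and this set is a compact polynomial
polyhedron, in particular a polynomially convex compact set. -/
theorem polyhedron_over_polyhedron (m n : ℕ) (Z : Set (CE (m + 1 + n)))
    (hZ : IsAlgebraicSet Z)
    (hZproper : ProperProjTo Z (univ : Set (CE (m + 1))))
    (hπZalg : IsAlgebraicSet (projFst (m + 1) n '' Z))
    (hπZproper : ProperProjTo (projFst (m + 1) n '' Z) (univ : Set (CE m)))
    (P : Set (CE m)) (hP : IsPolyPolyhedron P) (hPc : IsCompact P) :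
    ∃ s stil : ℝ, 0 < s ∧ 0 < stil ∧
      {z ∈ Z | projFst m 1 (projFst (m + 1) n z) ∈ P} =
        {z ∈ Z | projFst m 1 (projFst (m + 1) n z) ∈ P ∧
          projFst (m + 1) n z (Fin.last m) ∈ closure (Metric.ball (0 : ℂ) s) ∧
          projSnd (m + 1) n z ∈ closure (eball n stil)} ∧
      IsPolyPolyhedron {z ∈ Z | projFst m 1 (projFst (m + 1) n z) ∈ P} ∧
      IsCompact {z ∈ Z | projFst m 1 (projFst (m + 1) n z) ∈ P} ∧
      PolyConvex {z ∈ Z | projFst m 1 (projFst (m + 1) n z) ∈ P} :=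
  polyhedron_over_polyhedron_general m n Z hZ hZproper hπZproper P hP hPc
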